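/- arXiv:1712.08812 — 9 statements merged into one kernel-verified Lean document; each statement's English description precedes it below -/
import Mathlib

section
/- Let β, γ ∈ ℤ and define M(x,y,z) as the 3×3 matrix with rows [(γ²−γ+1−β²)(x−z)+βy+z, β(x−z)−γy, (β²−γ²+γ)(x−z)−βy], [−β(2γ−1)(x−z)+γy, γ(x−z)+βy+z, β(2γ−1)(x−z)+(1−γ)y], [(β²+γ²−γ)(x−z)−βy, −β(x−z)+(1−γ)y, −(β²+γ²−γ)(x−z)+βy+z]. Then for any Pythagorean triples a and b, the triple M(a).b (matrix–vector product) is a Pythagorean triple. -/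
def M (β γ : ℤ) (x y z : ℤ) : Matrix (Fin 3) (Fin 3) ℤ :=
  !![(γ^2 - γ + 1 - β^2)*(x - z) + β*y + z, β*(x - z) - γ*y, (β^2 - γ^2 + γ)*(x - z) - β*y;
     -β*(2*γ - 1)*(x - z) + γ*y, γ*(x - z) + β*y + z, β*(2*γ - 1)*(x - z) + (1 - γ)*y;
     (β^2 + γ^2 - γ)*(x - z) - β*y, -β*(x - z) + (1 - γ)*y, -(β^2 + γ^2 - γ)*(x - z) + β*y + z]

def Mv (β γ : ℤ) (a : Fin 3 → ℤ) : Matrix (Fin 3) (Fin 3) ℤ := M β γ (a 0) (a 1) (a 2)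

def bul (β γ : ℤ) (a b : Fin 3 → ℤ) : Fin 3 → ℤ := (Mv β γ a).mulVec b

/-! The Lorentz form `Q v = v₀² + v₁² - v₂²` satisfies the composition law
`Q (bul a b) = Q a ⟨c, b⟩² + Q b ⟨c, a⟩² - Q c Q a Q b` with `c = (1 - γ, β, γ)` and `⟨·,·⟩` the
Euclidean dot product. Every term carries a factor `Q a` or `Q b`, so it vanishes on
Pythagorean triples. -/

def pythagoreanDefect (v : Fin 3 → ℤ) : ℤ := v 0 ^ 2 + v 1 ^ 2 - v 2 ^ 2

theorem pythagoreanDefect_bul (β γ : ℤ) (a b : Fin 3 → ℤ) :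
    pythagoreanDefect (bul β γ a b) =
      pythagoreanDefect a * (![1 - γ, β, γ] ⬝ᵥ b) ^ 2
        + pythagoreanDefect b * (![1 - γ, β, γ] ⬝ᵥ a) ^ 2
        - pythagoreanDefect ![1 - γ, β, γ] * pythagoreanDefect a * pythagoreanDefect b := by
  simp only [pythagoreanDefect, bul, Mv, M, Matrix.mulVec, dotProduct, Fin.sum_univ_three,
    Matrix.of_apply, Matrix.cons_val', Matrix.cons_val_zero, Matrix.cons_val_one,
    Matrix.cons_val_two, Matrix.head_cons, Matrix.tail_cons, Matrix.empty_val',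
    Matrix.cons_val_fin_one, Matrix.head_fin_const]
  ring

theorem stmt_2 (β γ : ℤ) (a b : Fin 3 → ℤ)
    (ha : (a 0)^2 + (a 1)^2 = (a 2)^2) (hb : (b 0)^2 + (b 1)^2 = (b 2)^2) :
    (bul β γ a b 0)^2 + (bul β γ a b 1)^2 = (bul β γ a b 2)^2 := by
  have hQa : pythagoreanDefect a = 0 := sub_eq_zero.mpr ha
  have hQb : pythagoreanDefect b = 0 := sub_eq_zero.mpr hb
  have h := pythagoreanDefect_bul β γ a b
  rw [hQa, hQb] at h
  simpa [pythagoreanDefect, sub_eq_zero] using h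
end

section
/- For all β, γ ∈ ℤ and all triples a, b ∈ ℤ³, M_{β,γ}(a).b = M_{β,γ}(b).a (the product induced by M_{β,γ} is commutative). -/
theorem stmt_4 (β γ : ℤ) (a b : Fin 3 → ℤ) :
    (Mv β γ a).mulVec b = (Mv β γ b).mulVec a := by
  ext i
  fin_cases i <;>
    simp only [Mv, M, Matrix.mulVec, dotProduct, Fin.sum_univ_three, Matrix.of_apply,
      Matrix.cons_val_zero, Matrix.cons_val_one, Matrix.cons_val, Fin.zero_eta, Fin.mk_one,
      Fin.reduceFinMk] <;>
    ring
end

section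
/- For all β, γ ∈ ℤ and all triples a, b ∈ ℤ³, M_{β,γ}(M_{β,γ}(a).b) = M_{β,γ}(a).M_{β,γ}(b) (compatibility of the injection with matrix multiplication). -/
/-!
Writing `M(x, y, z) = (x - z) P + y Q + z 1` with `P = M(1, 0, 0)` and `Q = M(0, 1, 0)`, the
matrices `P` and `Q` commute and `P²`, `PQ`, `Q²` lie again in the span of `1, P, Q`, so the range
of `M` is closed under multiplication. Moreover `M(a) e = a` for `e = (1, 0, 1)`. Hence
`M(a) M(b) = M(c)` for some `c`, and applying both sides to `e` gives `c = M(a) M(b) e = M(a) b`.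
-/

open Matrix

namespace M

variable (β γ : ℤ)

local notation "Mat" => Matrix (Fin 3) (Fin 3) ℤ

def P : Mat := M β γ 1 0 0

def Q : Mat := M β γ 0 1 0

theorem eq_smul_add (x y z : ℤ) : M β γ x y z = (x - z) • P β γ + y • Q β γ + z • (1 : Mat) := by
  ext i j
  simp only [Matrix.add_apply, Matrix.smul_apply, smul_eq_mul, one_apply]
  fin_cases i <;> fin_cases j <;> simp [M, P, Q] <;> ring

theorem P_mul_P : P β γ * P β γ =
    (1 - 2 * β ^ 2) • P β γ + (β * (1 - 2 * γ)) • Q β γ + (β ^ 2 + γ ^ 2 - γ) • (1 : Mat) := by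
  ext i j
  simp only [Matrix.add_apply, Matrix.smul_apply, smul_eq_mul, one_apply]
  fin_cases i <;> fin_cases j <;> simp [P, Q, M, mul_apply, Fin.sum_univ_three] <;> ring

theorem P_mul_Q : P β γ * Q β γ = (2 * β) • P β γ + γ • Q β γ + (-β) • (1 : Mat) := by
  ext i j
  simp only [Matrix.add_apply, Matrix.smul_apply, smul_eq_mul, one_apply]
  fin_cases i <;> fin_cases j <;> simp [P, Q, M, mul_apply, Fin.sum_univ_three] <;> ring

theorem Q_mul_P : Q β γ * P β γ = (2 * β) • P β γ + γ • Q β γ + (-β) • (1 : Mat) := by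
  ext i j
  simp only [Matrix.add_apply, Matrix.smul_apply, smul_eq_mul, one_apply]
  fin_cases i <;> fin_cases j <;> simp [P, Q, M, mul_apply, Fin.sum_univ_three] <;> ring

theorem Q_mul_Q : Q β γ * Q β γ = (-1 : ℤ) • P β γ + β • Q β γ + (1 - γ) • (1 : Mat) := by
  ext i j
  simp only [Matrix.add_apply, Matrix.smul_apply, smul_eq_mul, one_apply]
  fin_cases i <;> fin_cases j <;> simp [P, Q, M, mul_apply, Fin.sum_univ_three] <;> ring

theorem exists_mul_eq (x y z x' y' z' : ℤ) :
    ∃ x'' y'' z'', M β γ x y z * M β γ x' y' z' = M β γ x'' y'' z'' := by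
  let u := x - z
  let u' := x' - z'
  -- `p`, `q`, `r` are the coefficients of `P`, `Q`, `1` in the expanded product; `M (p + r) q r`
  -- has exactly these coefficients by `eq_smul_add`.
  let p := u * u' * (1 - 2 * β ^ 2) + (u * y' + y * u') * (2 * β) - y * y' + u * z' + z * u'
  let q := u * u' * (β * (1 - 2 * γ)) + (u * y' + y * u') * γ + y * y' * β + y * z' + z * y'
  let r := u * u' * (β ^ 2 + γ ^ 2 - γ) - (u * y' + y * u') * β + y * y' * (1 - γ) + z * z'
  refine ⟨p + r, q, r, ?_⟩
  simp only [eq_smul_add, add_sub_cancel_right, add_mul, mul_add, smul_mul_assoc,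
    mul_smul_comm, mul_one, one_mul, P_mul_P, P_mul_Q, Q_mul_P, Q_mul_Q]
  module

theorem mulVec_unit (x y z : ℤ) : M β γ x y z *ᵥ ![1, 0, 1] = ![x, y, z] := by
  ext i
  fin_cases i <;> simp [M, mulVec, dotProduct, Fin.sum_univ_three] <;> ring

end M

theorem Mv_mulVec_unit (β γ : ℤ) (a : Fin 3 → ℤ) : Mv β γ a *ᵥ ![1, 0, 1] = a := by
  rw [Mv, M.mulVec_unit]
  ext i
  fin_cases i <;> rfl

theorem stmt_5 (β γ : ℤ) (a b : Fin 3 → ℤ) :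
    Mv β γ ((Mv β γ a).mulVec b) = Mv β γ a * Mv β γ b := by
  obtain ⟨x, y, z, hxyz⟩ := M.exists_mul_eq β γ (a 0) (a 1) (a 2) (b 0) (b 1) (b 2)
  have hc : Mv β γ a *ᵥ b = ![x, y, z] := by
    rw [← Mv_mulVec_unit β γ b, mulVec_mulVec, Mv, Mv, hxyz, M.mulVec_unit]
  rw [hc, Mv, Mv, Mv, hxyz]
  rfl
end

section
/- The operation a •_{β,γ} b := M_{β,γ}(a).b makes ℤ³ a commutative monoid with identity (1,0,1), for any fixed β, γ ∈ ℤ. -/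
/-!
`Mv β γ a` is the matrix of multiplication by `a` in a commutative ℤ-algebra structure on
`ℤ³` (its regular representation). Associativity of `bul` thus amounts to the representation
being multiplicative, `Mv (a • b) = Mv a * Mv b`, and `(1, 0, 1)` is the identity because
`Mv (1, 0, 1) = 1`; these, like commutativity, are polynomial identities in the entries.
-/

section

variable (β γ : ℤ)

theorem Mv_one_zero_one : Mv β γ ![1, 0, 1] = 1 := by
  ext i j
  fin_cases i <;> fin_cases j <;> simp [Mv, M]

theorem bul_comm (a b : Fin 3 → ℤ) : bul β γ a b = bul β γ b a := by
  funext i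
  fin_cases i <;>
    simp only [bul, Mv, M, Matrix.mulVec, dotProduct, Fin.sum_univ_three, Matrix.of_apply,
      Matrix.cons_val', Matrix.cons_val_fin_one, Matrix.cons_val_zero, Matrix.cons_val_one,
      Matrix.cons_val, Fin.isValue, Fin.mk_one, Fin.zero_eta, Fin.reduceFinMk] <;>
    ring

theorem Mv_bul (a b : Fin 3 → ℤ) : Mv β γ (bul β γ a b) = Mv β γ a * Mv β γ b := by
  ext i j
  fin_cases i <;> fin_cases j <;>
    simp only [bul, Mv, M, Matrix.mulVec, dotProduct, Fin.sum_univ_three,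
      Matrix.mul_apply, Matrix.of_apply,
      Matrix.cons_val', Matrix.cons_val_fin_one, Matrix.cons_val_zero, Matrix.cons_val_one,
      Matrix.cons_val, Fin.isValue, Fin.mk_one, Fin.zero_eta, Fin.reduceFinMk] <;>
    ring

theorem bul_assoc (a b c : Fin 3 → ℤ) :
    bul β γ (bul β γ a b) c = bul β γ a (bul β γ b c) := by
  rw [bul, Mv_bul, ← Matrix.mulVec_mulVec]
  rfl

theorem one_zero_one_bul (a : Fin 3 → ℤ) : bul β γ ![1, 0, 1] a = a := by
  rw [bul, Mv_one_zero_one, Matrix.one_mulVec]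

end

theorem stmt_6 (β γ : ℤ) :
    (∀ a b c : Fin 3 → ℤ, bul β γ (bul β γ a b) c = bul β γ a (bul β γ b c)) ∧
    (∀ a b : Fin 3 → ℤ, bul β γ a b = bul β γ b a) ∧
    (∀ a : Fin 3 → ℤ, bul β γ ![1, 0, 1] a = a) ∧
    (∀ a : Fin 3 → ℤ, bul β γ a ![1, 0, 1] = a) :=
  ⟨bul_assoc β γ, bul_comm β γ, one_zero_one_bul β γ,
    fun a => (bul_comm β γ a _).trans (one_zero_one_bul β γ a)⟩
end

section
/- For a Pythagorean triple (x,y,z), the matrix B₁ = [[x,0,0],[0,z,y],[0,y,z]] is Pythagorean-triple-preserving: for any Pythagorean triple (a,b,c), B₁.(a,b,c) is a Pythagorean triple. -/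
theorem stmt_8 (x y z a b c : ℤ) (h1 : x^2 + y^2 = z^2) (h2 : a^2 + b^2 = c^2) :
    (x*a)^2 + (z*b + y*c)^2 = (y*b + z*c)^2 := by
  linear_combination a^2 * h1 + (z^2 - y^2) * h2
end

section
/- Define, for parameters β, γ ∈ ℤ, the operation (u,v) *_{β,γ} (s,t) = (su + tv(1−2γ), tu + sv + 2βtv) on ℤ², and let M_{β,γ}(u,v) be the matrix obtained from the Pythagorean-triple-preserving family evaluated at (u²−v², 2uv, u²+v²). Then M_{β,γ}(u,v) · M_{β,γ}(s,t) = M_{β,γ}((u,v) *_{β,γ} (s,t)) for all (u,v), (s,t) ∈ ℤ². -/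
def Muv (β γ u v : ℤ) : Matrix (Fin 3) (Fin 3) ℤ := M β γ (u^2 - v^2) (2*u*v) (u^2 + v^2)

section QuadMap

variable {K R : Type*} [CommRing K] [Ring R] [Algebra K R]

def quadMap (D C : R) (u v : K) : R := u ^ 2 • 1 + (u * v) • D + v ^ 2 • C

theorem quadMap_mul_quadMap {D C : R} {p q : K}
    (hDD : D * D = p • D + (2 * q) • 1 + (2 : K) • C) (hDC : D * C = (2 * p) • C + q • D)
    (hCD : Commute D C) (hCC : C * C = p ^ 2 • C + (p * q) • D + q ^ 2 • 1) (u v s t : K) :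
    quadMap D C u v * quadMap D C s t =
      quadMap D C (s * u + t * v * q) (t * u + s * v + p * t * v) := by
  have hCD' : C * D = (2 * p) • C + q • D := hCD.eq ▸ hDC
  simp only [quadMap, add_mul, mul_add, smul_mul_smul, one_mul, mul_one, hDD, hDC, hCD', hCC,
    smul_add, smul_smul]
  module

end QuadMap

def Mcross (β γ : ℤ) : Matrix (Fin 3) (Fin 3) ℤ := M β γ 0 2 0

section Relations

variable (β γ : ℤ)

theorem Muv_eq_quadMap (u v : ℤ) : Muv β γ u v = quadMap (Mcross β γ) (Muv β γ 0 1) u v := by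
  ext i j
  simp only [quadMap, Matrix.add_apply, Matrix.smul_apply, Matrix.one_apply, smul_eq_mul]
  fin_cases i <;> fin_cases j <;> simp [Muv, Mcross, M] <;> ring

theorem Mcross_mul_self :
    Mcross β γ * Mcross β γ =
      (2 * β) • Mcross β γ + (2 * (1 - 2 * γ)) • 1 + (2 : ℤ) • Muv β γ 0 1 := by
  ext i j
  simp only [Matrix.add_apply, Matrix.smul_apply, Matrix.mul_apply, Fin.sum_univ_three,
    Matrix.one_apply, smul_eq_mul]
  fin_cases i <;> fin_cases j <;> simp [Muv, Mcross, M] <;> ring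

theorem Mcross_mul_Muv_zero_one :
    Mcross β γ * Muv β γ 0 1 = (2 * (2 * β)) • Muv β γ 0 1 + (1 - 2 * γ) • Mcross β γ := by
  ext i j
  simp only [Matrix.add_apply, Matrix.smul_apply, Matrix.mul_apply, Fin.sum_univ_three,
    smul_eq_mul]
  fin_cases i <;> fin_cases j <;> simp [Muv, Mcross, M] <;> ring

theorem commute_Mcross_Muv_zero_one : Commute (Mcross β γ) (Muv β γ 0 1) := by
  ext i j
  simp only [Matrix.mul_apply, Fin.sum_univ_three]
  fin_cases i <;> fin_cases j <;> simp [Muv, Mcross, M] <;> ring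

theorem Muv_zero_one_mul_self :
    Muv β γ 0 1 * Muv β γ 0 1 =
      (2 * β) ^ 2 • Muv β γ 0 1 + (2 * β * (1 - 2 * γ)) • Mcross β γ + (1 - 2 * γ) ^ 2 • 1 := by
  ext i j
  simp only [Matrix.add_apply, Matrix.smul_apply, Matrix.mul_apply, Fin.sum_univ_three,
    Matrix.one_apply, smul_eq_mul]
  fin_cases i <;> fin_cases j <;> simp [Muv, Mcross, M] <;> ring

end Relations

theorem stmt_10 (β γ u v s t : ℤ) :
    Muv β γ u v * Muv β γ s t
      = Muv β γ (s*u + t*v*(1 - 2*γ)) (t*u + s*v + 2*β*t*v) := by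
  have h := quadMap_mul_quadMap (Mcross_mul_self β γ) (Mcross_mul_Muv_zero_one β γ)
    (commute_Mcross_Muv_zero_one β γ) (Muv_zero_one_mul_self β γ) u v s t
  rwa [← Muv_eq_quadMap, ← Muv_eq_quadMap, ← Muv_eq_quadMap] at h
end

section
/- The determinant of M_{β,γ}(u,v) := M_{β,γ}(u²−v², 2uv, u²+v²) equals (u² + 2βuv − (1−2γ)v²)³ for all u, v, β, γ ∈ ℤ. -/
theorem det_M (β γ x y z : ℤ) :
    (M β γ x y z).det = (z + β*y + (1 - γ)*(x - z)) *
      ((z + β*y + (1 - γ)*(x - z))^2 + (1 + β^2 - 2*γ) * (z^2 - x^2 - y^2)) := by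
  simp only [M, Matrix.det_fin_three, Matrix.of_apply, Matrix.cons_val', Matrix.cons_val_zero,
    Matrix.cons_val_one, Matrix.cons_val_two, Matrix.empty_val', Matrix.cons_val_fin_one,
    Matrix.head_cons, Matrix.tail_cons, Matrix.head_fin_const]
  ring

theorem det_M_of_sq_add_sq {β γ x y z : ℤ} (h : x^2 + y^2 = z^2) :
    (M β γ x y z).det = (z + β*y + (1 - γ)*(x - z))^3 := by
  rw [det_M, ← h]
  ring

theorem stmt_11 (β γ u v : ℤ) :
    (M β γ (u^2 - v^2) (2*u*v) (u^2 + v^2)).det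
      = (u^2 + 2*β*u*v - (1 - 2*γ)*v^2)^3 := by
  rw [det_M_of_sq_add_sq (by ring)]
  ring
end

section
/- Let φ(u,v) = (u²−v², 2uv, u²+v²). For (u,v), (s,t) on the conic u² + 2βuv − (1−2γ)v² = 1 with β, γ ∈ ℤ, φ is a morphism: φ((u,v) *_{β,γ} (s,t)) = M_{β,γ}(φ(u,v)).φ(s,t), where *_{β,γ}(u,v)(s,t) = (su + tv(1−2γ), tu + sv + 2βtv). -/
def phi (u v : ℤ) : Fin 3 → ℤ := ![u^2 - v^2, 2*u*v, u^2 + v^2]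

theorem stmt_18_general (β γ u v s t : ℤ) :
    phi (s*u + t*v*(1 - 2*γ)) (t*u + s*v + 2*β*t*v)
      = (Mv β γ (phi u v)).mulVec (phi s t) := by
  ext i
  fin_cases i <;>
    simp only [phi, Mv, M, Matrix.mulVec, Matrix.vec3_dotProduct, Matrix.of_apply, Fin.reduceFinMk,
      Fin.isValue, Matrix.cons_val, Matrix.cons_val_zero, Matrix.cons_val_one] <;>
    ring

theorem stmt_18 (β γ u v s t : ℤ)
    (hu : u^2 + 2*β*u*v - (1 - 2*γ)*v^2 = 1)
    (hs : s^2 + 2*β*s*t - (1 - 2*γ)*t^2 = 1) :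
    phi (s*u + t*v*(1 - 2*γ)) (t*u + s*v + 2*β*t*v)
      = (Mv β γ (phi u v)).mulVec (phi s t) :=
  stmt_18_general β γ u v s t
end

section
/- If (u,v) ∈ ℤ² satisfies u² + 2βuv − (1−2γ)v² = 1 with β, γ ∈ ℤ, then M_{β,γ}(u²−v², 2uv, u²+v²).(( (u+2βv)²−v², −2v(u+2βv), (u+2βv)²+v² )) = (1, 0, 1); that is, φ(u+2βv, −v) is the inverse of the Pythagorean triple φ(u,v) under •_{β,γ}. -/
/-!
Without any hypothesis on `u, v`, the product `M_{β,γ}(φ(u, v)) · φ(u + 2βv, -v)` equals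
`Q(u, v)² • (1, 0, 1)` with `Q(u, v) = u² + 2βuv - (1 - 2γ)v²`: this is a polynomial identity
in `β, γ, u, v`. The hypothesis `Q(u, v) = 1` then turns it into the identity `(1, 0, 1)`.
-/

def quadForm (β γ u v : ℤ) : ℤ := u^2 + 2*β*u*v - (1 - 2*γ)*v^2

theorem M_mulVec_eq_quadForm_sq (β γ u v : ℤ) :
    (M β γ (u^2 - v^2) (2*u*v) (u^2 + v^2)).mulVec
      ![(u + 2*β*v)^2 - v^2, -2*v*(u + 2*β*v), (u + 2*β*v)^2 + v^2]
      = ![quadForm β γ u v ^ 2, 0, quadForm β γ u v ^ 2] := by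
  ext i
  fin_cases i <;> simp [M, quadForm, Matrix.mulVec, dotProduct, Fin.sum_univ_three] <;> ring

theorem stmt_19 (β γ u v : ℤ) (h : u^2 + 2*β*u*v - (1 - 2*γ)*v^2 = 1) :
    (M β γ (u^2 - v^2) (2*u*v) (u^2 + v^2)).mulVec
      ![(u + 2*β*v)^2 - v^2, -2*v*(u + 2*β*v), (u + 2*β*v)^2 + v^2]
      = ![1, 0, 1] := by
  have hQ : quadForm β γ u v = 1 := h
  rw [M_mulVec_eq_quadForm_sq, hQ, one_pow]
end
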